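/- Fix ε ∈ (0,1). There exists an integer C₀ = C₀(θ, ε, f, h) such that for every integer C ≥ C₀, setting N_ℓ := ℓ^C, the following holds: for Lebesgue-almost every α ∈ [1,2] there is a constant C_α with (2/N_ℓ²) ∑_{1 ≤ j ≤ N_ℓ^{1+ε}} |f̂(j/N_ℓ)| · |E_{N_ℓ,j}(α)|² ≤ C_α N_ℓ^{2ε} for all integers ℓ ≥ 1. -/

import Mathlib

open MeasureTheory Filter
open scoped Classical

noncomputable section

set_option maxHeartbeats 1000000

/-- `e(z) = exp(2πiz)`. -/
def e (z : ℝ) : ℂ := Complex.exp (2 * Real.pi * Complex.I * z)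

/-- Fourier transform `f̂(x) = ∫ f(y) e(-xy) dy`. -/
def fourierT (f : ℝ → ℝ) (x : ℝ) : ℂ := ∫ y : ℝ, (f y : ℂ) * e (-(x * y))

/-- The smooth exponential sum `E_{N,j}(α) = ∑_{y ≥ 1} h(y/N) e(α j y^θ)`. -/
def EE (θ : ℝ) (h : ℝ → ℝ) (N : ℕ) (j : ℕ) (α : ℝ) : ℂ :=
  ∑' y : ℕ, if 1 ≤ y then (h ((y : ℝ) / N) : ℂ) * e (α * j * (y : ℝ) ^ θ) else 0

lemma e_norm (x : ℝ) : ‖e x‖ = 1 := by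
  rw [e, Complex.norm_exp]
  have : (2 * ↑Real.pi * Complex.I * ↑x).re = 0 := by simp
  rw [this, Real.exp_zero]

lemma e_continuous (g : ℝ → ℝ) (hg : Continuous g) : Continuous fun x => e (g x) := by
  unfold e
  exact Complex.continuous_exp.comp (by continuity)

lemma e_mul_conj (a b : ℝ) : e a * (starRingEnd ℂ) (e b) = e (a - b) := by
  unfold e
  rw [← Complex.exp_conj, ← Complex.exp_add]
  congr 1
  simp only [map_mul, Complex.conj_I, Complex.conj_ofReal, map_ofNat]
  push_cast
  ring

lemma osc0 : ∫ α in Set.Icc (1:ℝ) 2, e (α * 0) = 1 := by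
  simp [e, MeasureTheory.integral_const, Real.volume_Icc]
  norm_num

lemma osc1 {t : ℝ} (ht : t ≠ 0) :
    ‖∫ α in Set.Icc (1:ℝ) 2, e (α * t)‖ ≤ 1 / |t| := by
  have hc : (2 * ↑Real.pi * Complex.I * (t:ℂ)) ≠ 0 := by
    simp [Complex.ext_iff, Real.pi_ne_zero, ht]
  have he : ∀ α : ℝ, e (α * t) = Complex.exp ((2 * ↑Real.pi * Complex.I * (t:ℂ)) * (α:ℂ)) := by
    intro α; unfold e; congr 1; push_cast; ring
  rw [show (∫ α in Set.Icc (1:ℝ) 2, e (α * t)) = ∫ α in (1:ℝ)..2, e (α * t) by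
    rw [intervalIntegral.integral_of_le (by norm_num), MeasureTheory.integral_Icc_eq_integral_Ioc]]
  simp_rw [he]
  rw [integral_exp_mul_complex hc]
  have hnorm : ∀ b : ℝ, ‖Complex.exp (2 * ↑Real.pi * Complex.I * (t:ℂ) * (b:ℂ))‖ = 1 := by
    intro b
    rw [Complex.norm_exp]
    have : (2 * ↑Real.pi * Complex.I * (t:ℂ) * (b:ℂ)).re = 0 := by simp
    rw [this, Real.exp_zero]
  rw [norm_div]
  have hcnorm : ‖2 * ↑Real.pi * Complex.I * (t:ℂ)‖ = 2 * Real.pi * |t| := by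
    simp [map_mul, Complex.norm_I, Complex.norm_real,
      abs_of_pos Real.pi_pos]
  rw [hcnorm]
  have h2 : ‖Complex.exp (2 * ↑Real.pi * Complex.I * (t:ℂ) * ((2:ℝ):ℂ)) -
      Complex.exp (2 * ↑Real.pi * Complex.I * (t:ℂ) * ((1:ℝ):ℂ))‖ ≤ 2 := by
    refine (norm_sub_le _ _).trans ?_
    rw [hnorm, hnorm]; norm_num
  have habs : 0 < |t| := abs_pos.mpr ht
  have hpi : (1:ℝ) ≤ Real.pi := by linarith [Real.pi_gt_three]
  calc ‖Complex.exp (2 * ↑Real.pi * Complex.I * (t:ℂ) * ((2:ℝ):ℂ)) -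
      Complex.exp (2 * ↑Real.pi * Complex.I * (t:ℂ) * ((1:ℝ):ℂ))‖ / (2 * Real.pi * |t|)
      ≤ 2 / (2 * Real.pi * |t|) := by
        apply div_le_div_of_nonneg_right h2 (by positivity) |>.trans_eq rfl
    _ ≤ 1 / |t| := by
        rw [div_le_div_iff₀ (by positivity) habs]
        nlinarith

lemma rpow_gap {θ : ℝ} (hθ0 : 0 < θ) (hθ1 : θ < 1) {a b R : ℝ}
    (ha : 1 ≤ a) (hab : a < b) (hbR : b ≤ R) :
    θ * R ^ (θ - 1) * (b - a) ≤ b ^ θ - a ^ θ := by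
  have ha0 : (0:ℝ) < a := by linarith
  have hcont : ContinuousOn (fun x : ℝ => x ^ θ) (Set.Icc a b) := by
    apply ContinuousOn.rpow_const continuousOn_id
    intro x hx
    exact Or.inl (by rintro rfl; exact absurd hx.1 (by linarith))
  have hderiv : ∀ x ∈ Set.Ioo a b, HasDerivAt (fun x : ℝ => x ^ θ) (θ * x ^ (θ - 1)) x := by
    intro x hx
    exact Real.hasDerivAt_rpow_const (Or.inl (by rintro rfl; exact absurd hx.1 (by linarith)))
  obtain ⟨c, hc, hceq⟩ := exists_hasDerivAt_eq_slope (fun x : ℝ => x ^ θ)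
    (fun x => θ * x ^ (θ - 1)) hab hcont hderiv
  have hc0 : (0:ℝ) < c := by linarith [hc.1]
  have hcR : c ≤ R := by linarith [hc.2]
  have hkey : R ^ (θ - 1) ≤ c ^ (θ - 1) :=
    Real.rpow_le_rpow_of_nonpos hc0 hcR (by linarith)
  have hba : (0:ℝ) < b - a := by linarith
  have := hceq
  have h2 : θ * R ^ (θ - 1) ≤ (b ^ θ - a ^ θ) / (b - a) := by
    rw [← this]
    exact mul_le_mul_of_nonneg_left hkey hθ0.le
  calc θ * R ^ (θ - 1) * (b - a) ≤ ((b ^ θ - a ^ θ) / (b - a)) * (b - a) := by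
        exact mul_le_mul_of_nonneg_right h2 hba.le
    _ = b ^ θ - a ^ θ := div_mul_cancel₀ _ (ne_of_gt hba)

-- abs version for naturals in [N, 2N]
lemma rpow_gap_abs {θ : ℝ} (hθ0 : 0 < θ) (hθ1 : θ < 1) {N y y' : ℕ} (hN : 1 ≤ N)
    (hy : y ∈ Finset.Icc N (2*N)) (hy' : y' ∈ Finset.Icc N (2*N)) (hne : y ≠ y') :
    θ * (2*(N:ℝ)) ^ (θ - 1) * |(y:ℝ) - y'| ≤ |(y:ℝ) ^ θ - (y':ℝ) ^ θ| := by
  simp only [Finset.mem_Icc] at hy hy'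
  have hN1 : (1:ℝ) ≤ (N:ℝ) := by exact_mod_cast hN
  have h2N : ((2*N : ℕ):ℝ) = 2*(N:ℝ) := by push_cast; ring
  rcases lt_or_gt_of_ne hne with hlt | hlt
  · -- y < y'
    have h1 : (1:ℝ) ≤ (y:ℝ) := le_trans hN1 (by exact_mod_cast hy.1)
    have h2 : (y:ℝ) < (y':ℝ) := by exact_mod_cast hlt
    have h3 : (y':ℝ) ≤ 2*(N:ℝ) := by rw [← h2N]; exact_mod_cast hy'.2
    have := rpow_gap hθ0 hθ1 h1 h2 h3
    rw [abs_sub_comm ((y:ℝ)) _, abs_of_pos (by linarith), abs_sub_comm ((y:ℝ)^θ) _,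
      abs_of_pos (by
        have := Real.rpow_lt_rpow (by linarith : (0:ℝ) ≤ (y:ℝ)) h2 hθ0
        linarith)]
    linarith
  · have h1 : (1:ℝ) ≤ (y':ℝ) := le_trans hN1 (by exact_mod_cast hy'.1)
    have h2 : (y':ℝ) < (y:ℝ) := by exact_mod_cast hlt
    have h3 : (y:ℝ) ≤ 2*(N:ℝ) := by rw [← h2N]; exact_mod_cast hy.2
    have := rpow_gap hθ0 hθ1 h1 h2 h3
    rw [abs_of_pos (by linarith), abs_of_pos (by
        have := Real.rpow_lt_rpow (by linarith : (0:ℝ) ≤ (y':ℝ)) h2 hθ0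
        linarith)]
    linarith

def EE' (θ : ℝ) (h : ℝ → ℝ) (N : ℕ) (j : ℕ) (α : ℝ) : ℂ :=
  ∑ y ∈ Finset.Icc N (2*N), (h ((y : ℝ) / N) : ℂ) * e (α * j * (y : ℝ) ^ θ)

lemma EE_eq {θ : ℝ} {h : ℝ → ℝ} (hh_supp : Function.support h ⊆ Set.Icc 1 2)
    {N : ℕ} (hN : 1 ≤ N) (j : ℕ) (α : ℝ) : EE θ h N j α = EE' θ h N j α := by
  have hN0 : (0:ℝ) < (N:ℝ) := by exact_mod_cast hN
  rw [EE, EE']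
  rw [tsum_eq_sum (s := Finset.Icc N (2*N)) ?_]
  · apply Finset.sum_congr rfl
    intro y hy
    simp only [Finset.mem_Icc] at hy
    rw [if_pos (le_trans hN hy.1)]
  · intro y hy
    simp only [Finset.mem_Icc, not_and_or, not_le] at hy
    by_cases h1 : 1 ≤ y
    · rw [if_pos h1]
      have hz : h ((y:ℝ)/N) = 0 := by
        by_contra hc
        have := hh_supp (Function.mem_support.mpr hc)
        simp only [Set.mem_Icc] at this
        rcases hy with hy | hy
        · have : (y:ℝ)/N < 1 := by
            rw [div_lt_one hN0]; exact_mod_cast hy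
          linarith [‹(1:ℝ) ≤ (y:ℝ)/N ∧ (y:ℝ)/N ≤ 2›.1]
        · have h2 : (2:ℝ) < (y:ℝ)/N := by
            rw [lt_div_iff₀ hN0]
            push_cast
            exact_mod_cast (by push_cast; exact_mod_cast hy : (2*(N:ℕ):ℝ) < (y:ℝ))
          linarith [‹(1:ℝ) ≤ (y:ℝ)/N ∧ (y:ℝ)/N ≤ 2›.2]
      rw [hz]; simp
    · rw [if_neg h1]

lemma EE'_continuous (θ : ℝ) (h : ℝ → ℝ) (N j : ℕ) : Continuous fun α => EE' θ h N j α := by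
  unfold EE'
  apply continuous_finset_sum
  intro y _
  exact continuous_const.mul (e_continuous _ (by continuity))

lemma h_bound {h : ℝ → ℝ} (hh : Continuous h) (hh_supp : Function.support h ⊆ Set.Icc 1 2) :
    ∃ M : ℝ, 0 ≤ M ∧ ∀ x, |h x| ≤ M := by
  have hcs : HasCompactSupport h := HasCompactSupport.of_support_subset_isCompact isCompact_Icc hh_supp
  obtain ⟨M, hM⟩ := hh.bounded_above_of_compact_support hcs
  exact ⟨M, le_trans (norm_nonneg (h 0)) (hM 0), fun x => (Real.norm_eq_abs _).symm.trans_le (hM x) ⟩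

lemma fourierT_bound {f : ℝ → ℝ} (hf : Continuous f) (hfc : HasCompactSupport f) (x : ℝ) :
    ‖fourierT f x‖ ≤ ∫ y : ℝ, |f y| := by
  rw [fourierT]
  refine (norm_integral_le_integral_norm _).trans_eq ?_
  congr 1
  ext y
  rw [norm_mul, e_norm, mul_one, Complex.norm_real, Real.norm_eq_abs]

def PP (N : ℕ) : ℝ :=
  ∑ y ∈ Finset.Icc N (2*N), ∑ y' ∈ Finset.Icc N (2*N),
    if y = y' then 0 else |(y:ℝ) - (y':ℝ)|⁻¹

lemma intEE_sq {θ : ℝ} (hθ0 : 0 < θ) (hθ1 : θ < 1) {h : ℝ → ℝ} {M : ℝ} (hM : 0 ≤ M)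
    (hhM : ∀ x, |h x| ≤ M) {N j : ℕ} (hN : 1 ≤ N) (hj : 1 ≤ j) :
    ∫ α in Set.Icc (1:ℝ) 2, ‖EE' θ h N j α‖^2 ≤
      M^2 * ((N:ℝ)+1) + (M^2 * (2*(N:ℝ))^(1-θ) / (θ*(j:ℝ))) * PP N := by
  set Y := Finset.Icc N (2*N) with hY
  set c : ℕ → ℂ := fun y => ((h ((y:ℝ)/N) : ℝ) : ℂ) with hc
  set t : ℕ → ℕ → ℝ := fun y y' => (j:ℝ) * ((y:ℝ)^θ - (y':ℝ)^θ) with ht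
  have hz_expand : ∀ α : ℝ, EE' θ h N j α * (starRingEnd ℂ) (EE' θ h N j α) =
      ∑ y ∈ Y, ∑ y' ∈ Y, c y * (starRingEnd ℂ) (c y') * e (α * t y y') := by
    intro α
    rw [EE', map_sum, Finset.sum_mul_sum]
    apply Finset.sum_congr rfl; intro y _
    apply Finset.sum_congr rfl; intro y' _
    rw [map_mul]
    have : (starRingEnd ℂ) ((h ((y':ℝ)/N) : ℂ)) = ((h ((y':ℝ)/N) : ℝ) : ℂ) :=
      Complex.conj_ofReal _
    rw [this]
    have := e_mul_conj (α * j * (y:ℝ)^θ) (α * j * (y':ℝ)^θ)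
    have harg : α * j * (y:ℝ)^θ - α * j * (y':ℝ)^θ = α * t y y' := by rw [ht]; ring
    rw [mul_mul_mul_comm, this, harg, hc]
  -- each term integrable
  have hterm_int : ∀ y y' : ℕ, IntegrableOn
      (fun α : ℝ => c y * (starRingEnd ℂ) (c y') * e (α * t y y')) (Set.Icc (1:ℝ) 2) := by
    intro y y'
    exact (Continuous.integrableOn_Icc (by
      exact continuous_const.mul (e_continuous _ (by continuity))))
  -- step: real integral = norm of complex integral
  have hnn : 0 ≤ ∫ α in Set.Icc (1:ℝ) 2, ‖EE' θ h N j α‖^2 :=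
    integral_nonneg (fun α => by positivity)
  have hcoe : ((∫ α in Set.Icc (1:ℝ) 2, ‖EE' θ h N j α‖^2 : ℝ) : ℂ) =
      ∫ α in Set.Icc (1:ℝ) 2, EE' θ h N j α * (starRingEnd ℂ) (EE' θ h N j α) := by
    have : (fun α => EE' θ h N j α * (starRingEnd ℂ) (EE' θ h N j α)) =
        fun α => ((‖EE' θ h N j α‖^2 : ℝ) : ℂ) := by
      funext α
      rw [Complex.mul_conj, Complex.normSq_eq_norm_sq]
    rw [this]
    exact (integral_ofReal (𝕜 := ℂ)).symm
  have hstep : ∫ α in Set.Icc (1:ℝ) 2, ‖EE' θ h N j α‖^2 =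
      ‖∫ α in Set.Icc (1:ℝ) 2, EE' θ h N j α * (starRingEnd ℂ) (EE' θ h N j α)‖ := by
    rw [← hcoe, Complex.norm_real, Real.norm_eq_abs, abs_of_nonneg hnn]
  rw [hstep]
  have hswap : (∫ α in Set.Icc (1:ℝ) 2, EE' θ h N j α * (starRingEnd ℂ) (EE' θ h N j α)) =
      ∑ y ∈ Y, ∑ y' ∈ Y, ∫ α in Set.Icc (1:ℝ) 2, c y * (starRingEnd ℂ) (c y') * e (α * t y y') := by
    simp_rw [hz_expand]
    rw [integral_finset_sum _ (fun y _ => integrable_finset_sum _ (fun y' _ => hterm_int y y'))]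
    exact Finset.sum_congr rfl fun y _ => integral_finset_sum _ fun y' _ => hterm_int y y'
  rw [hswap]
  -- bound each term
  have hbnd : ∀ y ∈ Y, ∀ y' ∈ Y,
      ‖∫ α in Set.Icc (1:ℝ) 2, c y * (starRingEnd ℂ) (c y') * e (α * t y y')‖ ≤
      (if y = y' then M^2 else 0) +
        (if y = y' then 0 else M^2 * ((2*(N:ℝ))^(1-θ) / (θ*(j:ℝ))) * |(y:ℝ) - (y':ℝ)|⁻¹) := by
    intro y hy y' hy'
    rw [MeasureTheory.integral_const_mul, norm_mul]
    have hcn : ‖c y * (starRingEnd ℂ) (c y')‖ ≤ M^2 := by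
      rw [norm_mul, RingHomIsometric.norm_map]
      simp only [hc, Complex.norm_real, Real.norm_eq_abs]
      calc |h ((y:ℝ)/N)| * |h ((y':ℝ)/N)| ≤ M * M :=
            mul_le_mul (hhM _) (hhM _) (abs_nonneg _) hM
        _ = M^2 := (sq M).symm
    by_cases hyy : y = y'
    · subst hyy
      rw [if_pos rfl, if_pos rfl, add_zero]
      have ht0 : t y y = 0 := by rw [ht]; simp
      rw [ht0, osc0, norm_one, mul_one]
      exact hcn
    · simp only [if_neg hyy, zero_add]
      have hNpos : (0:ℝ) < 2*(N:ℝ) := by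
        have : (1:ℝ) ≤ (N:ℝ) := by exact_mod_cast hN
        linarith
      have hgap := rpow_gap_abs hθ0 hθ1 hN hy hy' hyy
      have hd : (0:ℝ) < |(y:ℝ) - (y':ℝ)| := by
        rw [abs_pos, sub_ne_zero]
        exact_mod_cast fun hh => hyy (by exact_mod_cast hh)
      have hDpos : (0:ℝ) < (2*(N:ℝ))^(θ-1) := Real.rpow_pos_of_pos hNpos _
      have hΔpos : (0:ℝ) < |(y:ℝ)^θ - (y':ℝ)^θ| := lt_of_lt_of_le (by positivity) hgap
      have hjpos : (0:ℝ) < (j:ℝ) := by exact_mod_cast hj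
      have htne : t y y' ≠ 0 := by
        rw [ht]
        simp only [ne_eq, mul_eq_zero, not_or]
        constructor
        · exact ne_of_gt hjpos
        · exact fun hh => by rw [hh, abs_zero] at hΔpos; exact lt_irrefl 0 hΔpos
      have hosc := osc1 htne
      have htabs : (j:ℝ) * (θ * (2*(N:ℝ))^(θ-1) * |(y:ℝ) - (y':ℝ)|) ≤ |t y y'| := by
        rw [ht, abs_mul, Nat.abs_cast]
        exact mul_le_mul_of_nonneg_left hgap hjpos.le
      have hrw : (2*(N:ℝ))^(1-θ) = ((2*(N:ℝ))^(θ-1))⁻¹ := by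
        rw [show (1-θ) = -(θ-1) by ring, Real.rpow_neg hNpos.le]
      have h1t : 1/|t y y'| ≤ (2*(N:ℝ))^(1-θ) / (θ*(j:ℝ)) * |(y:ℝ) - (y':ℝ)|⁻¹ := by
        rw [hrw, div_le_iff₀ (abs_pos.mpr htne)]
        have heq : ((2*(N:ℝ))^(θ-1))⁻¹ / (θ*(j:ℝ)) * |(y:ℝ) - (y':ℝ)|⁻¹ *
            ((j:ℝ) * (θ * (2*(N:ℝ))^(θ-1) * |(y:ℝ) - (y':ℝ)|)) = 1 := by
          field_simp
        calc (1:ℝ) = ((2*(N:ℝ))^(θ-1))⁻¹ / (θ*(j:ℝ)) * |(y:ℝ) - (y':ℝ)|⁻¹ *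
            ((j:ℝ) * (θ * (2*(N:ℝ))^(θ-1) * |(y:ℝ) - (y':ℝ)|)) := heq.symm
          _ ≤ ((2*(N:ℝ))^(θ-1))⁻¹ / (θ*(j:ℝ)) * |(y:ℝ) - (y':ℝ)|⁻¹ * |t y y'| :=
            mul_le_mul_of_nonneg_left htabs (by positivity)
      calc ‖c y * (starRingEnd ℂ) (c y')‖ * ‖∫ α in Set.Icc (1:ℝ) 2, e (α * t y y')‖
          ≤ M^2 * (1/|t y y'|) := by
            apply mul_le_mul hcn hosc (norm_nonneg _) (by positivity)
        _ ≤ M^2 * ((2*(N:ℝ))^(1-θ) / (θ*(j:ℝ)) * |(y:ℝ) - (y':ℝ)|⁻¹) := by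
            apply mul_le_mul_of_nonneg_left h1t (by positivity)
        _ = M^2 * ((2*(N:ℝ))^(1-θ) / (θ*(j:ℝ))) * |(y:ℝ) - (y':ℝ)|⁻¹ := by ring
  calc ‖∑ y ∈ Y, ∑ y' ∈ Y, ∫ α in Set.Icc (1:ℝ) 2, c y * (starRingEnd ℂ) (c y') * e (α * t y y')‖
      ≤ ∑ y ∈ Y, ∑ y' ∈ Y, ‖∫ α in Set.Icc (1:ℝ) 2, c y * (starRingEnd ℂ) (c y') * e (α * t y y')‖ := by
        refine (norm_sum_le _ _).trans (Finset.sum_le_sum fun y _ => norm_sum_le _ _)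
    _ ≤ ∑ y ∈ Y, ∑ y' ∈ Y, ((if y = y' then M^2 else 0) +
        (if y = y' then 0 else M^2 * ((2*(N:ℝ))^(1-θ) / (θ*(j:ℝ))) * |(y:ℝ) - (y':ℝ)|⁻¹)) := by
        exact Finset.sum_le_sum fun y hy => Finset.sum_le_sum fun y' hy' => hbnd y hy y' hy'
    _ = M^2 * ((N:ℝ)+1) + (M^2 * (2*(N:ℝ))^(1-θ) / (θ*(j:ℝ))) * PP N := by
        simp_rw [Finset.sum_add_distrib]
        congr 1
        · have hinner : ∀ y ∈ Y, (∑ y' ∈ Y, if y = y' then M^2 else 0) = M^2 := by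
            intro y hy
            rw [Finset.sum_ite_eq Y y (fun _ => M^2), if_pos hy]
          rw [Finset.sum_congr rfl hinner, Finset.sum_const, hY, Nat.card_Icc]
          have : 2*N + 1 - N = N + 1 := by omega
          rw [this, nsmul_eq_mul]
          push_cast; ring
        · rw [PP, Finset.mul_sum]
          apply Finset.sum_congr rfl; intro y _
          rw [Finset.mul_sum]
          apply Finset.sum_congr rfl; intro y' _
          by_cases hyy : y = y'
          · simp [hyy]
          · rw [if_neg hyy, if_neg hyy]; ring

lemma harmonic_Icc (n : ℕ) : ∑ d ∈ Finset.Icc 1 n, (d:ℝ)⁻¹ ≤ 1 + Real.log n := by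
  have h1 : ((harmonic n : ℚ) : ℝ) = ∑ d ∈ Finset.Icc 1 n, (d:ℝ)⁻¹ := by
    rw [harmonic_eq_sum_Icc]
    push_cast
    rfl
  rw [← h1]
  exact harmonic_le_one_add_log n

lemma inj_sum_le (N : ℕ) (s : Finset ℕ) (φ : ℕ → ℕ)
    (hinj : ∀ x ∈ s, ∀ y ∈ s, φ x = φ y → x = y)
    (hmem : ∀ x ∈ s, φ x ∈ Finset.Icc 1 N) :
    ∑ x ∈ s, ((φ x : ℝ))⁻¹ ≤ 1 + Real.log N := by
  rw [← Finset.sum_image (f := fun d : ℕ => (d:ℝ)⁻¹) hinj]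
  refine le_trans (Finset.sum_le_sum_of_subset_of_nonneg ?_ ?_) (harmonic_Icc N)
  · intro d hd
    obtain ⟨x, hx, rfl⟩ := Finset.mem_image.mp hd
    exact hmem x hx
  · intro d _ _; positivity

lemma PP_bound {N : ℕ} (hN : 1 ≤ N) : PP N ≤ ((N:ℝ)+1) * (2 * (1 + Real.log N)) := by
  rw [PP]
  have hinner : ∀ y ∈ Finset.Icc N (2*N),
      (∑ y' ∈ Finset.Icc N (2*N), if y = y' then 0 else |(y:ℝ) - (y':ℝ)|⁻¹)
        ≤ 2 * (1 + Real.log N) := by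
    intro y hy
    simp only [Finset.mem_Icc] at hy
    set Y := Finset.Icc N (2*N) with hY
    have herase : (∑ y' ∈ Y, if y = y' then 0 else |(y:ℝ) - (y':ℝ)|⁻¹) =
        ∑ y' ∈ Y.erase y, |(y:ℝ) - (y':ℝ)|⁻¹ := by
      rw [← Finset.sum_erase Y (by simp : (if y = y then (0:ℝ) else |(y:ℝ) - (y:ℝ)|⁻¹) = 0)]
      apply Finset.sum_congr rfl
      intro y' hy'
      rw [if_neg (Ne.symm (Finset.ne_of_mem_erase hy'))]
    rw [herase]
    rw [← Finset.sum_filter_add_sum_filter_not (Y.erase y) (fun y' => y' < y)]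
    have hB : ∑ y' ∈ (Y.erase y).filter (fun y' => y' < y), |(y:ℝ) - (y':ℝ)|⁻¹ ≤
        1 + Real.log N := by
      have hcong : ∀ y' ∈ (Y.erase y).filter (fun y' => y' < y),
          |(y:ℝ) - (y':ℝ)|⁻¹ = (((y - y' : ℕ) : ℝ))⁻¹ := by
        intro y' hy'
        simp only [Finset.mem_filter] at hy'
        have : (y':ℝ) < y := by exact_mod_cast hy'.2
        rw [abs_of_pos (by linarith), Nat.cast_sub hy'.2.le]
      rw [Finset.sum_congr rfl hcong]
      apply inj_sum_le N _ (fun y' => y - y')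
      · intro a ha b hb hab
        simp only [Finset.mem_filter] at ha hb
        omega
      · intro x hx
        simp only [Finset.mem_filter, Finset.mem_erase, hY, Finset.mem_Icc] at hx
        simp only [Finset.mem_Icc]
        omega
    have hA : ∑ y' ∈ (Y.erase y).filter (fun y' => ¬ y' < y), |(y:ℝ) - (y':ℝ)|⁻¹ ≤
        1 + Real.log N := by
      have hcong : ∀ y' ∈ (Y.erase y).filter (fun y' => ¬ y' < y),
          |(y:ℝ) - (y':ℝ)|⁻¹ = (((y' - y : ℕ) : ℝ))⁻¹ := by
        intro y' hy'
        simp only [Finset.mem_filter, Finset.mem_erase, not_lt] at hy'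
        have hlt : y < y' := lt_of_le_of_ne hy'.2 (Ne.symm hy'.1.1)
        have : (y:ℝ) < y' := by exact_mod_cast hlt
        rw [abs_of_neg (by linarith), neg_sub, Nat.cast_sub hlt.le]
      rw [Finset.sum_congr rfl hcong]
      apply inj_sum_le N _ (fun y' => y' - y)
      · intro a ha b hb hab
        simp only [Finset.mem_filter, Finset.mem_erase, not_lt] at ha hb
        omega
      · intro x hx
        simp only [Finset.mem_filter, Finset.mem_erase, hY, Finset.mem_Icc, not_lt] at hx
        simp only [Finset.mem_Icc]
        omega
    linarith
  calc (∑ y ∈ Finset.Icc N (2*N), ∑ y' ∈ Finset.Icc N (2*N),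
      if y = y' then 0 else |(y:ℝ) - (y':ℝ)|⁻¹)
      ≤ ∑ y ∈ Finset.Icc N (2*N), 2 * (1 + Real.log N) := Finset.sum_le_sum hinner
    _ = ((N:ℝ)+1) * (2 * (1 + Real.log N)) := by
        rw [Finset.sum_const, Nat.card_Icc, nsmul_eq_mul]
        have : 2*N + 1 - N = N + 1 := by omega
        rw [this]
        push_cast; ring

lemma lemA {θ ε : ℝ} (hθ0 : 0 < θ) (hθ1 : θ < 1) (hε0 : 0 < ε) (hε1 : ε < 1)
    {h f : ℝ → ℝ} {M F : ℝ} (hM : 0 ≤ M) (hhM : ∀ x, |h x| ≤ M)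
    (hF : ∀ x, ‖fourierT f x‖ ≤ F) (hF0 : 0 ≤ F)
    {N : ℕ} (hN : 1 ≤ N) :
    ∫ α in Set.Icc (1:ℝ) 2, ((2/((N:ℝ))^2) * ∑ j ∈ Finset.Icc 1 ⌊(N:ℝ)^(1+ε)⌋₊,
        ‖fourierT f ((j:ℝ)/N)‖ * ‖EE' θ h N j α‖^2)
      ≤ (F*M^2*(4 + (32/θ)*(1+2/θ)^2)) * (N:ℝ)^ε := by
  have hone : (1:ℝ) ≤ (N:ℝ) := by exact_mod_cast hN
  have hn0 : (0:ℝ) < (N:ℝ) := by linarith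
  set n : ℝ := (N:ℝ) with hn
  set J : ℕ := ⌊n^(1+ε)⌋₊ with hJ
  set L : ℝ := 1 + Real.log n with hL
  have hlog0 : 0 ≤ Real.log n := Real.log_nonneg hone
  have hL1 : (1:ℝ) ≤ L := by rw [hL]; linarith
  -- integrability
  have hint : ∀ j : ℕ, IntegrableOn (fun α : ℝ => ‖fourierT f ((j:ℝ)/N)‖ * ‖EE' θ h N j α‖^2)
      (Set.Icc (1:ℝ) 2) := fun j =>
    Continuous.integrableOn_Icc (continuous_const.mul (((EE'_continuous θ h N j).norm).pow 2))
  -- swap integral and sum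
  have hswap : ∫ α in Set.Icc (1:ℝ) 2, ((2/n^2) * ∑ j ∈ Finset.Icc 1 J,
      ‖fourierT f ((j:ℝ)/N)‖ * ‖EE' θ h N j α‖^2)
      = (2/n^2) * ∑ j ∈ Finset.Icc 1 J,
        ‖fourierT f ((j:ℝ)/N)‖ * ∫ α in Set.Icc (1:ℝ) 2, ‖EE' θ h N j α‖^2 := by
    rw [MeasureTheory.integral_const_mul]
    congr 1
    rw [integral_finset_sum _ (fun j _ => hint j)]
    exact Finset.sum_congr rfl fun j _ => MeasureTheory.integral_const_mul _ _
  rw [hswap]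
  -- per-j bound
  have hperj : ∀ j ∈ Finset.Icc 1 J,
      ‖fourierT f ((j:ℝ)/N)‖ * ∫ α in Set.Icc (1:ℝ) 2, ‖EE' θ h N j α‖^2 ≤
      F*M^2*(n+1) + (F*M^2*(2*n)^(1-θ)*(n+1)*2*L/θ) * (j:ℝ)⁻¹ := by
    intro j hj
    simp only [Finset.mem_Icc] at hj
    have hj1 : 1 ≤ j := hj.1
    have hjpos : (0:ℝ) < (j:ℝ) := by exact_mod_cast hj1
    have hInn : 0 ≤ ∫ α in Set.Icc (1:ℝ) 2, ‖EE' θ h N j α‖^2 :=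
      integral_nonneg fun α => by positivity
    have h1 := intEE_sq hθ0 hθ1 hM hhM hN hj1
    have h2 : M^2 * (n+1) + (M^2 * (2*n)^(1-θ) / (θ*(j:ℝ))) * PP N ≤
        M^2 * (n+1) + (M^2 * (2*n)^(1-θ) / (θ*(j:ℝ))) * ((n+1) * (2*L)) := by
      have hPP := PP_bound hN
      have hcoef : 0 ≤ M^2 * (2*n)^(1-θ) / (θ*(j:ℝ)) := by positivity
      have := mul_le_mul_of_nonneg_left hPP hcoef
      linarith
    calc ‖fourierT f ((j:ℝ)/N)‖ * ∫ α in Set.Icc (1:ℝ) 2, ‖EE' θ h N j α‖^2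
        ≤ F * (M^2 * (n+1) + (M^2 * (2*n)^(1-θ) / (θ*(j:ℝ))) * ((n+1) * (2*L))) :=
          mul_le_mul (hF _) (h1.trans h2) hInn hF0
      _ = F*M^2*(n+1) + (F*M^2*(2*n)^(1-θ)*(n+1)*2*L/θ) * (j:ℝ)⁻¹ := by
          field_simp
  have hsum : ∑ j ∈ Finset.Icc 1 J,
      (F*M^2*(n+1) + (F*M^2*(2*n)^(1-θ)*(n+1)*2*L/θ) * (j:ℝ)⁻¹)
      = (J:ℝ) * (F*M^2*(n+1)) + (F*M^2*(2*n)^(1-θ)*(n+1)*2*L/θ) *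
        ∑ j ∈ Finset.Icc 1 J, (j:ℝ)⁻¹ := by
    rw [Finset.sum_add_distrib, Finset.sum_const, Nat.card_Icc, ← Finset.mul_sum]
    simp [nsmul_eq_mul]
  -- harmonic bound for j-sum
  have hHJ : ∑ j ∈ Finset.Icc 1 J, (j:ℝ)⁻¹ ≤ 2*L := by
    refine (harmonic_Icc J).trans ?_
    have hlogJ : Real.log J ≤ (1+ε) * Real.log n := by
      rcases Nat.eq_zero_or_pos J with hJ0 | hJ0
      · rw [hJ0]; simp; positivity
      · have hJpos : (0:ℝ) < (J:ℝ) := by exact_mod_cast hJ0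
        have hle : (J:ℝ) ≤ n^(1+ε) := Nat.floor_le (by positivity)
        calc Real.log J ≤ Real.log (n^(1+ε)) := Real.log_le_log hJpos hle
          _ = (1+ε) * Real.log n := Real.log_rpow hn0 _
    rw [hL]; nlinarith
  -- the big numeric estimate
  have hsum2 : (J:ℝ) * (F*M^2*(n+1)) + (F*M^2*(2*n)^(1-θ)*(n+1)*2*L/θ) *
      (∑ j ∈ Finset.Icc 1 J, (j:ℝ)⁻¹) ≤
      (n^ε * n^2) * (F*M^2*(2 + (16/θ)*(1+2/θ)^2)) := by
    have hJle : (J:ℝ) ≤ n^(1+ε) := Nat.floor_le (by positivity)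
    have hcoefnn : 0 ≤ F*M^2*(2*n)^(1-θ)*(n+1)*2*L/θ := by positivity
    have hterm2 : (F*M^2*(2*n)^(1-θ)*(n+1)*2*L/θ) * (∑ j ∈ Finset.Icc 1 J, (j:ℝ)⁻¹)
        ≤ (F*M^2*(2*n)^(1-θ)*(n+1)*2*L/θ) * (2*L) := mul_le_mul_of_nonneg_left hHJ hcoefnn
    -- rpow facts
    have f1 : n^(1+ε) = n^(1:ℝ) * n^ε := Real.rpow_add hn0 1 ε
    have f1' : n^(1:ℝ) = n := Real.rpow_one n
    have f3 : (2*n)^(1-θ) ≤ 2 * n^(1-θ) := by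
      rw [Real.mul_rpow (by norm_num) hn0.le]
      have : (2:ℝ)^(1-θ) ≤ 2^(1:ℝ) := Real.rpow_le_rpow_of_exponent_le (by norm_num) (by linarith)
      rw [Real.rpow_one] at this
      exact mul_le_mul_of_nonneg_right this (by positivity)
    have f4 : L^2 ≤ (1+2/θ)^2 * n^θ := by
      have hhalf : (0:ℝ) < θ/2 := by linarith
      have hlogle : Real.log n ≤ n^(θ/2) / (θ/2) := Real.log_le_rpow_div hn0.le hhalf
      have hone_le : (1:ℝ) ≤ n^(θ/2) := Real.one_le_rpow hone (by positivity)
      have hLle : L ≤ (1+2/θ) * n^(θ/2) := by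
        rw [hL]
        have : n^(θ/2)/(θ/2) = (2/θ) * n^(θ/2) := by field_simp
        rw [this] at hlogle
        nlinarith
      have hsq : ((1+2/θ) * n^(θ/2))^2 = (1+2/θ)^2 * n^θ := by
        rw [mul_pow, ← Real.rpow_natCast (n^(θ/2)) 2, ← Real.rpow_mul hn0.le]
        norm_num
      calc L^2 ≤ ((1+2/θ) * n^(θ/2))^2 := by
            have hnn : (0:ℝ) ≤ (1+2/θ) * n^(θ/2) := by positivity
            apply sq_le_sq' (by linarith) hLle
        _ = (1+2/θ)^2 * n^θ := hsq
    have f5 : n^(1-θ) * n^θ = n := by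
      rw [← Real.rpow_add hn0]; norm_num
    have f6 : (1:ℝ) ≤ n^ε := Real.one_le_rpow hone hε0.le
    have hn1 : n + 1 ≤ 2*n := by linarith
    -- term 1
    have hT1 : (J:ℝ) * (F*M^2*(n+1)) ≤ (n^ε * n^2) * (F*M^2*2) := by
      have : (J:ℝ) * (F*M^2*(n+1)) ≤ n^(1+ε) * (F*M^2*(2*n)) := by
        apply mul_le_mul hJle (by nlinarith [mul_le_mul_of_nonneg_left hn1 (show (0:ℝ) ≤ F*M^2 by positivity)]) (by positivity) (by positivity)
      rw [f1, f1'] at this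
      calc (J:ℝ) * (F*M^2*(n+1)) ≤ n * n^ε * (F*M^2*(2*n)) := this
        _ = (n^ε * n^2) * (F*M^2*2) := by ring
    -- term 2
    have hT2 : (F*M^2*(2*n)^(1-θ)*(n+1)*2*L/θ) * (2*L) ≤
        (n^ε * n^2) * (F*M^2*((16/θ)*(1+2/θ)^2)) := by
      have step1 : (F*M^2*(2*n)^(1-θ)*(n+1)*2*L/θ) * (2*L) =
          (F*M^2/θ) * ((2*n)^(1-θ) * ((n+1) * (4 * L^2))) := by ring
      have step2 : (2*n)^(1-θ) * ((n+1) * (4 * L^2)) ≤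
          (2*n^(1-θ)) * ((2*n) * (4 * ((1+2/θ)^2 * n^θ))) := by
        apply mul_le_mul f3
        · apply mul_le_mul hn1 (by nlinarith [f4]) (by positivity) (by positivity)
        · positivity
        · positivity
      have step3 : (2*n^(1-θ)) * ((2*n) * (4 * ((1+2/θ)^2 * n^θ))) =
          (16*(1+2/θ)^2) * (n^(1-θ) * n^θ) * n := by ring
      rw [step1]
      calc (F*M^2/θ) * ((2*n)^(1-θ) * ((n+1) * (4 * L^2)))
          ≤ (F*M^2/θ) * ((2*n^(1-θ)) * ((2*n) * (4 * ((1+2/θ)^2 * n^θ)))) := by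
            apply mul_le_mul_of_nonneg_left step2 (by positivity)
        _ = (F*M^2/θ) * ((16*(1+2/θ)^2) * (n^(1-θ) * n^θ) * n) := by rw [step3]
        _ = (F*M^2/θ) * ((16*(1+2/θ)^2) * n * n) := by rw [f5]
        _ = (n * n) * (F*M^2*((16/θ)*(1+2/θ)^2)) := by ring
        _ ≤ (n^ε * n^2) * (F*M^2*((16/θ)*(1+2/θ)^2)) := by
            have h1 : n * n ≤ n^ε * n^2 := by nlinarith
            apply mul_le_mul_of_nonneg_right h1 (by positivity)
      done
    calc (J:ℝ) * (F*M^2*(n+1)) + (F*M^2*(2*n)^(1-θ)*(n+1)*2*L/θ) *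
        (∑ j ∈ Finset.Icc 1 J, (j:ℝ)⁻¹)
        ≤ (n^ε * n^2) * (F*M^2*2) + (n^ε * n^2) * (F*M^2*((16/θ)*(1+2/θ)^2)) := by
          have := hterm2.trans hT2
          linarith [hT1]
      _ = (n^ε * n^2) * (F*M^2*(2 + (16/θ)*(1+2/θ)^2)) := by ring
  -- conclude
  calc (2/n^2) * ∑ j ∈ Finset.Icc 1 J,
      ‖fourierT f ((j:ℝ)/N)‖ * ∫ α in Set.Icc (1:ℝ) 2, ‖EE' θ h N j α‖^2
      ≤ (2/n^2) * ((n^ε * n^2) * (F*M^2*(2 + (16/θ)*(1+2/θ)^2))) := by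
        apply mul_le_mul_of_nonneg_left _ (by positivity)
        calc ∑ j ∈ Finset.Icc 1 J,
            ‖fourierT f ((j:ℝ)/N)‖ * ∫ α in Set.Icc (1:ℝ) 2, ‖EE' θ h N j α‖^2
            ≤ ∑ j ∈ Finset.Icc 1 J,
              (F*M^2*(n+1) + (F*M^2*(2*n)^(1-θ)*(n+1)*2*L/θ) * (j:ℝ)⁻¹) :=
              Finset.sum_le_sum hperj
          _ = _ := hsum
          _ ≤ _ := hsum2
    _ = (F*M^2*(4 + (32/θ)*(1+2/θ)^2)) * n^ε := by
        have hn2 : n^2 ≠ 0 := by positivity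
        field_simp
        ring

def gN (θ ε : ℝ) (h f : ℝ → ℝ) (N : ℕ) (α : ℝ) : ℝ :=
  (2 / ((N:ℝ))^2) * ∑ j ∈ Finset.Icc 1 ⌊((N:ℝ))^(1+ε)⌋₊,
    ‖fourierT f ((j:ℝ)/(N:ℝ))‖ * ‖EE' θ h N j α‖^2

lemma gN_continuous (θ ε : ℝ) (h f : ℝ → ℝ) (N : ℕ) : Continuous (gN θ ε h f N) :=
  continuous_const.mul (continuous_finset_sum _ fun j _ =>
    continuous_const.mul (((EE'_continuous θ h N j).norm).pow 2))

lemma gN_nonneg (θ ε : ℝ) (h f : ℝ → ℝ) (N : ℕ) (α : ℝ) : 0 ≤ gN θ ε h f N α :=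
  mul_nonneg (by positivity) (Finset.sum_nonneg fun j _ => by positivity)

lemma lemB {θ ε : ℝ} (hθ0 : 0 < θ) (hθ1 : θ < 1) (hε0 : 0 < ε) (hε1 : ε < 1)
    {h f : ℝ → ℝ} {M F : ℝ} (hM : 0 ≤ M) (hhM : ∀ x, |h x| ≤ M)
    (hF : ∀ x, ‖fourierT f x‖ ≤ F) (hF0 : 0 ≤ F)
    {N : ℕ} (hN : 1 ≤ N) :
    ∫⁻ α in Set.Icc (1:ℝ) 2, ENNReal.ofReal (gN θ ε h f N α * (((N:ℝ)^(2*ε))⁻¹))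
      ≤ ENNReal.ofReal ((F*M^2*(4 + (32/θ)*(1+2/θ)^2)) * ((N:ℝ))^(-ε)) := by
  have hn0 : (0:ℝ) < (N:ℝ) := by exact_mod_cast hN
  set K := F*M^2*(4 + (32/θ)*(1+2/θ)^2) with hK
  have hK0 : 0 ≤ K := by positivity
  have hint : IntegrableOn (fun α => gN θ ε h f N α * (((N:ℝ)^(2*ε))⁻¹)) (Set.Icc (1:ℝ) 2) :=
    Continuous.integrableOn_Icc ((gN_continuous θ ε h f N).mul continuous_const)
  rw [← ofReal_integral_eq_lintegral_ofReal hint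
    (ae_of_all _ fun α => mul_nonneg (gN_nonneg θ ε h f N α) (by positivity))]
  apply ENNReal.ofReal_le_ofReal
  rw [MeasureTheory.integral_mul_const]
  have h1 : ∫ α in Set.Icc (1:ℝ) 2, gN θ ε h f N α ≤ K * (N:ℝ)^ε := by
    have := lemA hθ0 hθ1 hε0 hε1 hM hhM hF hF0 hN
    simpa [gN] using this
  calc (∫ α in Set.Icc (1:ℝ) 2, gN θ ε h f N α) * (((N:ℝ)^(2*ε))⁻¹)
      ≤ (K * (N:ℝ)^ε) * (((N:ℝ)^(2*ε))⁻¹) := by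
        apply mul_le_mul_of_nonneg_right h1 (by positivity)
    _ = K * (N:ℝ)^(-ε) := by
        rw [← Real.rpow_neg hn0.le (2*ε), mul_assoc, ← Real.rpow_add hn0]
        congr 2
        ring

theorem crude_upper_bound_along_subsequence
    (θ : ℝ) (hθ0 : 0 < θ) (hθ1 : θ < 1)
    (h f : ℝ → ℝ)
    (hh_smooth : ContDiff ℝ (⊤ : ℕ∞) h) (hh_nonneg : ∀ x, 0 ≤ h x)
    (hh_supp : Function.support h ⊆ Set.Icc 1 2)
    (hf_smooth : ContDiff ℝ (⊤ : ℕ∞) f) (hf_supp : HasCompactSupport f)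
    (hf_even : ∀ x, f (-x) = f x)
    (ε : ℝ) (hε0 : 0 < ε) (hε1 : ε < 1) :
    ∃ C₀ : ℕ, ∀ C : ℕ, C₀ ≤ C →
      ∀ᵐ α : ℝ ∂(volume : Measure ℝ), α ∈ Set.Icc (1 : ℝ) 2 →
        ∃ Cα : ℝ, ∀ ℓ : ℕ, 1 ≤ ℓ →
          (2 / ((ℓ ^ C : ℕ) : ℝ) ^ 2) *
              ∑ j ∈ Finset.Icc 1 ⌊((ℓ ^ C : ℕ) : ℝ) ^ (1 + ε)⌋₊,
                ‖fourierT f ((j : ℝ) / (ℓ ^ C : ℕ))‖ *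
                  (‖EE θ h (ℓ ^ C) j α‖) ^ 2 ≤
            Cα * ((ℓ ^ C : ℕ) : ℝ) ^ (2 * ε) := by
  obtain ⟨M, hM0, hhM⟩ := h_bound hh_smooth.continuous hh_supp
  set F : ℝ := ∫ y : ℝ, |f y| with hFdef
  have hF0 : 0 ≤ F := integral_nonneg fun y => abs_nonneg _
  have hF : ∀ x, ‖fourierT f x‖ ≤ F := fun x => fourierT_bound hf_smooth.continuous hf_supp x
  set K := F*M^2*(4 + (32/θ)*(1+2/θ)^2) with hK
  have hK0 : 0 ≤ K := by positivity
  refine ⟨⌈2/ε⌉₊, fun C hC => ?_⟩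
  have hCε : 2 ≤ (C:ℝ) * ε := by
    have h1 : (2/ε : ℝ) ≤ (⌈2/ε⌉₊ : ℝ) := Nat.le_ceil _
    have h2 : ((⌈2/ε⌉₊ : ℕ) : ℝ) ≤ (C:ℝ) := by exact_mod_cast hC
    have := h1.trans h2
    calc (2:ℝ) = (2/ε) * ε := by field_simp
      _ ≤ (C:ℝ) * ε := by apply mul_le_mul_of_nonneg_right this hε0.le
  have hC0 : C ≠ 0 := by
    rintro rfl
    simp at hCε
    nlinarith
  -- the ENNReal-valued functions
  set u : ℕ → ℝ → ENNReal := fun ℓ α =>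
    ENNReal.ofReal (gN θ ε h f (ℓ^C) α * ((((ℓ^C:ℕ):ℝ))^(2*ε))⁻¹) with hu
  have hmeas : ∀ ℓ, Measurable (u ℓ) := fun ℓ =>
    ((gN_continuous θ ε h f (ℓ^C)).mul continuous_const).measurable.ennreal_ofReal
  have hGmeas : Measurable fun α => ∑' ℓ, u ℓ α := Measurable.ennreal_tsum hmeas
  -- the summable bound
  have hbnd : ∀ ℓ : ℕ, (∫⁻ α in Set.Icc (1:ℝ) 2, u ℓ α) ≤
      ENNReal.ofReal (K * ((ℓ:ℝ))^(-((C:ℝ)*ε))) := by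
    intro ℓ
    rcases Nat.eq_zero_or_pos ℓ with rfl | hℓ
    · have hz : ((0:ℕ)^C : ℕ) = 0 := by simp [hC0]
      have hzero : ∀ α : ℝ, u 0 α = 0 := by
        intro α
        rw [hu]
        simp only [hz]
        have : (((0:ℕ):ℝ))^(2*ε) = 0 := by
          rw [Nat.cast_zero]
          exact Real.zero_rpow (by positivity)
        rw [this]
        simp
      simp only [hzero]
      simp
    · have hN : 1 ≤ ℓ^C := Nat.one_le_pow _ _ hℓ
      refine (lemB hθ0 hθ1 hε0 hε1 hM0 hhM hF hF0 hN).trans ?_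
      apply ENNReal.ofReal_le_ofReal
      apply mul_le_mul_of_nonneg_left _ hK0
      have : (((ℓ^C:ℕ):ℝ)) = ((ℓ:ℝ))^(C:ℕ) := by push_cast; ring
      rw [this, ← Real.rpow_natCast ((ℓ:ℝ)) C, ← Real.rpow_mul (by positivity)]
      apply le_of_eq
      congr 1
      ring
  have hsummable : Summable (fun ℓ : ℕ => K * ((ℓ:ℝ))^(-((C:ℝ)*ε))) := by
    apply Summable.mul_left
    apply Real.summable_nat_rpow.mpr
    linarith
  have htop : (∑' ℓ : ℕ, ∫⁻ α in Set.Icc (1:ℝ) 2, u ℓ α) < ⊤ := by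
    calc (∑' ℓ : ℕ, ∫⁻ α in Set.Icc (1:ℝ) 2, u ℓ α)
        ≤ ∑' ℓ : ℕ, ENNReal.ofReal (K * ((ℓ:ℝ))^(-((C:ℝ)*ε))) := ENNReal.tsum_le_tsum hbnd
      _ = ENNReal.ofReal (∑' ℓ : ℕ, K * ((ℓ:ℝ))^(-((C:ℝ)*ε))) := by
          rw [ENNReal.ofReal_tsum_of_nonneg (fun ℓ => by positivity) hsummable]
      _ < ⊤ := ENNReal.ofReal_lt_top
  have hlint : ∫⁻ α in Set.Icc (1:ℝ) 2, (∑' ℓ, u ℓ α) = ∑' ℓ, ∫⁻ α in Set.Icc (1:ℝ) 2, u ℓ α :=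
    lintegral_tsum fun ℓ => (hmeas ℓ).aemeasurable
  have hae : ∀ᵐ α ∂(volume.restrict (Set.Icc (1:ℝ) 2)), (∑' ℓ, u ℓ α) < ⊤ := by
    apply ae_lt_top hGmeas
    rw [hlint]
    exact htop.ne
  rw [ae_restrict_iff' measurableSet_Icc] at hae
  filter_upwards [hae] with α hα hmem
  have hGfin : (∑' ℓ, u ℓ α) < ⊤ := hα hmem
  refine ⟨(∑' ℓ, u ℓ α).toReal, fun ℓ hℓ => ?_⟩
  have hN : 1 ≤ ℓ^C := Nat.one_le_pow _ _ hℓ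
  have hn0 : (0:ℝ) < ((ℓ^C:ℕ):ℝ) := by exact_mod_cast hN
  -- rewrite the goal in terms of gN
  have hgoal_eq : (2 / ((ℓ ^ C : ℕ) : ℝ) ^ 2) *
      ∑ j ∈ Finset.Icc 1 ⌊((ℓ ^ C : ℕ) : ℝ) ^ (1 + ε)⌋₊,
        ‖fourierT f ((j : ℝ) / (ℓ ^ C : ℕ))‖ *
          (‖EE θ h (ℓ ^ C) j α‖) ^ 2 = gN θ ε h f (ℓ^C) α := by
    rw [gN]
    congr 1
    apply Finset.sum_congr rfl
    intro j _
    rw [EE_eq hh_supp hN j α]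
  rw [hgoal_eq]
  have hle : u ℓ α ≤ ∑' ℓ, u ℓ α := ENNReal.le_tsum ℓ
  have hle2 : gN θ ε h f (ℓ^C) α * ((((ℓ^C:ℕ):ℝ))^(2*ε))⁻¹ ≤ (∑' ℓ, u ℓ α).toReal := by
    rw [← ENNReal.ofReal_le_iff_le_toReal hGfin.ne]
    exact hle
  have hw : (0:ℝ) < (((ℓ^C:ℕ):ℝ))^(2*ε) := Real.rpow_pos_of_pos hn0 _
  calc gN θ ε h f (ℓ^C) α
      = (gN θ ε h f (ℓ^C) α * ((((ℓ^C:ℕ):ℝ))^(2*ε))⁻¹) * (((ℓ^C:ℕ):ℝ))^(2*ε) := by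
        field_simp
    _ ≤ (∑' ℓ, u ℓ α).toReal * (((ℓ^C:ℕ):ℝ))^(2*ε) :=
        mul_le_mul_of_nonneg_right hle2 hw.le
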